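/- Let B₁ and B₂ be skew left braces, α a group homomorphism from (B₂,∘) to Aut(B₁,+,∘), and B := B₁ ⋊_α B₂ the semidirect product. Suppose B₁ is Artinian. If B is semiprime, then B₁ is semiprime. -/

import Mathlib

/-!
Pick a nonzero ideal `I` of `B₁` with `I * I = 0`. Since `B₁` is Artinian, `I` contains a
minimal ideal `M`, and `M * M = 0`. Each `α_c(M)` is again an ideal, and by minimality the
ideals `M` and `α_c(M)` either meet trivially or `M ⊆ α_c(M)`; in both cases
`M * α_c(M) = 0`. Applying the automorphisms `α_a`, the translates `α_c(M)` are pairwise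
`*`-orthogonal; as `x * y = 0` means `λ_x(y) = y`, this passes to their sum `S`, a nonzero
`α`-invariant ideal with `S * S = 0`, and `S × {0}` is then a nonzero ideal of
`B₁ ⋊_α B₂` whose square is zero.
-/

/-- A *skew left brace* is a set with two group structures `(B,+)` and `(B,∘)`
(the latter written multiplicatively) satisfying `a∘(b+c) = a∘b - a + a∘c`.
The two identity elements automatically coincide. -/
class SkewLeftBrace (B : Type*) extends AddGroup B, Group B where
  mul_add_eq : ∀ a b c : B, a * (b + c) = a * b - a + a * c

namespace SkewLeftBrace

variable {B : Type*} [SkewLeftBrace B]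

/-- The map `λ_a : b ↦ -a + a∘b`. -/
def lmap (a b : B) : B := -a + a * b

/-- The brace star operation `a*b := -a + a∘b - b`. -/
def bstar (a b : B) : B := -a + a * b - b

/-- `X*Y`: the additive subgroup generated by all `bstar x y`, `x ∈ X`, `y ∈ Y`,
regarded as a set. -/
def setStar (X Y : Set B) : Set B :=
  ↑(AddSubgroup.closure {z : B | ∃ x ∈ X, ∃ y ∈ Y, z = bstar x y})

/-- Pointwise sum of two subsets. -/
def setSum (X Y : Set B) : Set B := {w : B | ∃ x ∈ X, ∃ y ∈ Y, w = x + y}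

/-- `X^Z := {z + x - z : x ∈ X, z ∈ Z}`. -/
def setConj (X Z : Set B) : Set B := {w : B | ∃ x ∈ X, ∃ z ∈ Z, w = z + x + -z}

/-- An ideal of a skew left brace: a subgroup of `(B,+)` which is normal in both
`(B,+)` and `(B,∘)` and invariant under all the maps `λ_a`. -/
structure IsIdeal (I : Set B) : Prop where
  zero_mem : (0 : B) ∈ I
  add_mem : ∀ ⦃x y : B⦄, x ∈ I → y ∈ I → x + y ∈ I
  neg_mem : ∀ ⦃x : B⦄, x ∈ I → -x ∈ I
  add_conj_mem : ∀ (b : B) ⦃x : B⦄, x ∈ I → b + x + -b ∈ I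
  mul_mem : ∀ ⦃x y : B⦄, x ∈ I → y ∈ I → x * y ∈ I
  inv_mem : ∀ ⦃x : B⦄, x ∈ I → x⁻¹ ∈ I
  mul_conj_mem : ∀ (b : B) ⦃x : B⦄, x ∈ I → b * x * b⁻¹ ∈ I
  lmap_mem : ∀ (a : B) ⦃x : B⦄, x ∈ I → lmap a x ∈ I

/-- A minimal ideal: a nonzero ideal whose only sub-ideals are `{0}` and itself. -/
def IsMinimalIdeal (I : Set B) : Prop :=
  IsIdeal I ∧ I ≠ {0} ∧ ∀ J : Set B, IsIdeal J → J ⊆ I → J = {0} ∨ J = I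

theorem mul_zero' (a : B) : a * (0 : B) = a := by
  have h := SkewLeftBrace.mul_add_eq a (0 : B) (0 : B)
  rw [add_zero] at h
  have h2 : a * (0:B) - a = 0 := (right_eq_add.mp h)
  exact sub_eq_zero.mp h2

theorem zero_eq_one : (0 : B) = 1 := by
  have h := mul_zero' (1 : B)
  rw [one_mul] at h
  exact h

theorem IsIdeal.one_mem {I : Set B} (h : IsIdeal I) : (1 : B) ∈ I :=
  (zero_eq_one (B := B)) ▸ h.zero_mem

variable (B) in
/-- A skew left brace is *semiprime* if `I*I ≠ {0}` for every nonzero ideal `I`. -/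
def Semiprime : Prop := ∀ I : Set B, IsIdeal I → I ≠ {0} → setStar I I ≠ {0}

variable (B) in
/-- A skew left brace is *prime*... (and) *simple* if its only ideals are `{0}` and `B`,
and these are distinct. -/
def Simple : Prop :=
  ({0} : Set B) ≠ Set.univ ∧ ∀ I : Set B, IsIdeal I → I = {0} ∨ I = Set.univ

variable (B) in
/-- A skew left brace is *Artinian* if every descending chain of ideals stabilizes. -/
def Artinian : Prop :=
  ∀ f : ℕ → Set B, (∀ n, IsIdeal (f n)) → (∀ n, f (n + 1) ⊆ f n) →
    ∃ N, ∀ n, N ≤ n → f n = f N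

/-- The `*`-products of copies of a fixed set `I`. -/
inductive IsStarPowerOf (I : Set B) : Set B → Prop
  | base : IsStarPowerOf I I
  | star {X Y : Set B} : IsStarPowerOf I X → IsStarPowerOf I Y →
      IsStarPowerOf I (setStar X Y)

variable (B) in
/-- A skew left brace is *strongly semiprime* if for every nonzero ideal `I`, every
`*`-product of copies of `I` is nonzero. -/
def StronglySemiprime : Prop :=
  ∀ I : Set B, IsIdeal I → I ≠ {0} → ∀ X : Set B, IsStarPowerOf I X → X ≠ {0}

/-- The `*`-products of nonzero ideals. -/
inductive IsStarProdOfNonzeroIdeals : Set B → Prop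
  | ideal {I : Set B} : IsIdeal I → I ≠ {0} → IsStarProdOfNonzeroIdeals I
  | star {X Y : Set B} : IsStarProdOfNonzeroIdeals X → IsStarProdOfNonzeroIdeals Y →
      IsStarProdOfNonzeroIdeals (setStar X Y)

variable (B) in
/-- A skew left brace is *strongly prime* if every `*`-product of nonzero ideals is nonzero. -/
def StronglyPrime : Prop :=
  ∀ X : Set B, IsStarProdOfNonzeroIdeals X → X ≠ {0}

end SkewLeftBrace
namespace SkewLeftBrace

variable {B : Type*} [SkewLeftBrace B]

/-- An ideal, regarded as a skew left brace with the restricted operations. -/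
def IsIdeal.brace {I : Set B} (h : IsIdeal I) : SkewLeftBrace I :=
  letI : Zero I := ⟨⟨0, h.zero_mem⟩⟩
  letI : Add I := ⟨fun x y => ⟨x.1 + y.1, h.add_mem x.2 y.2⟩⟩
  letI : Neg I := ⟨fun x => ⟨-x.1, h.neg_mem x.2⟩⟩
  letI : One I := ⟨⟨1, h.one_mem⟩⟩
  letI : Mul I := ⟨fun x y => ⟨x.1 * y.1, h.mul_mem x.2 y.2⟩⟩
  letI : Inv I := ⟨fun x => ⟨x.1⁻¹, h.inv_mem x.2⟩⟩
  { add := (· + ·)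
    zero := 0
    neg := (- ·)
    nsmul := nsmulRec
    zsmul := zsmulRec
    add_assoc := fun a b c => Subtype.ext (add_assoc a.1 b.1 c.1)
    zero_add := fun a => Subtype.ext (zero_add a.1)
    add_zero := fun a => Subtype.ext (add_zero a.1)
    neg_add_cancel := fun a => Subtype.ext (neg_add_cancel a.1)
    mul := (· * ·)
    one := 1
    inv := (·⁻¹)
    npow := npowRec
    zpow := zpowRec
    mul_assoc := fun a b c => Subtype.ext (mul_assoc a.1 b.1 c.1)
    one_mul := fun a => Subtype.ext (one_mul a.1)
    mul_one := fun a => Subtype.ext (mul_one a.1)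
    inv_mul_cancel := fun a => Subtype.ext (inv_mul_cancel a.1)
    mul_add_eq := fun a b c =>
      Subtype.ext (by
        show a.1 * (b.1 + c.1) = a.1 * b.1 + -a.1 + a.1 * c.1
        rw [SkewLeftBrace.mul_add_eq, sub_eq_add_neg]) }

/-- The direct product of two skew left braces, with componentwise operations. -/
def prodBrace (B₁ B₂ : Type*) [SkewLeftBrace B₁] [SkewLeftBrace B₂] :
    SkewLeftBrace (B₁ × B₂) :=
  { (inferInstance : AddGroup (B₁ × B₂)), (inferInstance : Group (B₁ × B₂)) with
    mul_add_eq := fun a b c =>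
      Prod.ext (by simp [SkewLeftBrace.mul_add_eq]) (by simp [SkewLeftBrace.mul_add_eq]) }

/-- Two skew left braces are isomorphic if there is a bijection preserving `+` and `∘`. -/
def IsBraceIsomorphic (A C : Type*) [SkewLeftBrace A] [SkewLeftBrace C] : Prop :=
  ∃ f : A ≃ C, (∀ x y : A, f (x + y) = f x + f y) ∧ (∀ x y : A, f (x * y) = f x * f y)

/-- A group homomorphism from `(B₂,∘)` to the automorphism group `Aut(B₁,+,∘)` of the
skew left brace `B₁`, presented as an action `act : B₂ → B₁ → B₁` by skew left brace
automorphisms. -/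
structure BraceActionHom (B₂ B₁ : Type*) [SkewLeftBrace B₂] [SkewLeftBrace B₁] where
  act : B₂ → B₁ → B₁
  act_bijective : ∀ a : B₂, Function.Bijective (act a)
  act_add : ∀ (a : B₂) (x y : B₁), act a (x + y) = act a x + act a y
  act_mul : ∀ (a : B₂) (x y : B₁), act a (x * y) = act a x * act a y
  act_hom : ∀ (a b : B₂) (x : B₁), act (a * b) x = act a (act b x)
  act_one : ∀ x : B₁, act (1 : B₂) x = x

variable {B₁ B₂ : Type*} [SkewLeftBrace B₁] [SkewLeftBrace B₂]

theorem BraceActionHom.act_one' (α : BraceActionHom B₂ B₁) (a : B₂) :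
    α.act a (1 : B₁) = 1 := by
  have h := α.act_mul a 1 1
  rw [mul_one] at h
  exact mul_eq_left.mp h.symm

/-- The underlying type of the semidirect product of two skew left braces. -/
@[ext]
structure SDP (B₁ B₂ : Type*) where
  fst : B₁
  snd : B₂

/-- The semidirect product `B₁ ⋊_α B₂` of skew left braces: the additive group is the
direct product, while `(a₁,a₂) ∘ (b₁,b₂) = (a₁ ∘ α_{a₂}(b₁), a₂ ∘ b₂)`. -/
def BraceActionHom.sdp (α : BraceActionHom B₂ B₁) : SkewLeftBrace (SDP B₁ B₂) :=
  letI : Zero (SDP B₁ B₂) := ⟨⟨0, 0⟩⟩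
  letI : Add (SDP B₁ B₂) := ⟨fun p q => ⟨p.fst + q.fst, p.snd + q.snd⟩⟩
  letI : Neg (SDP B₁ B₂) := ⟨fun p => ⟨-p.fst, -p.snd⟩⟩
  letI : One (SDP B₁ B₂) := ⟨⟨1, 1⟩⟩
  letI : Mul (SDP B₁ B₂) := ⟨fun p q => ⟨p.fst * α.act p.snd q.fst, p.snd * q.snd⟩⟩
  letI : Inv (SDP B₁ B₂) := ⟨fun p => ⟨α.act p.snd⁻¹ p.fst⁻¹, p.snd⁻¹⟩⟩
  { add := (· + ·)
    zero := 0
    neg := (- ·)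
    nsmul := nsmulRec
    zsmul := zsmulRec
    add_assoc := fun a b c =>
      SDP.ext (add_assoc a.fst b.fst c.fst) (add_assoc a.snd b.snd c.snd)
    zero_add := fun a => SDP.ext (zero_add a.fst) (zero_add a.snd)
    add_zero := fun a => SDP.ext (add_zero a.fst) (add_zero a.snd)
    neg_add_cancel := fun a => SDP.ext (neg_add_cancel a.fst) (neg_add_cancel a.snd)
    mul := (· * ·)
    one := 1
    inv := (·⁻¹)
    npow := npowRec
    zpow := zpowRec
    mul_assoc := fun a b c =>
      SDP.ext
        (by show (a.fst * α.act a.snd b.fst) * α.act (a.snd * b.snd) c.fst =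
              a.fst * α.act a.snd (b.fst * α.act b.snd c.fst)
            rw [α.act_hom, α.act_mul, mul_assoc])
        (mul_assoc a.snd b.snd c.snd)
    one_mul := fun a =>
      SDP.ext (by show (1 : B₁) * α.act 1 a.fst = a.fst; rw [α.act_one, one_mul])
        (one_mul a.snd)
    mul_one := fun a =>
      SDP.ext (by show a.fst * α.act a.snd (1 : B₁) = a.fst; rw [α.act_one', mul_one])
        (mul_one a.snd)
    inv_mul_cancel := fun a =>
      SDP.ext
        (by show α.act a.snd⁻¹ a.fst⁻¹ * α.act a.snd⁻¹ a.fst = 1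
            rw [← α.act_mul, inv_mul_cancel, α.act_one'])
        (inv_mul_cancel a.snd)
    mul_add_eq := fun a b c =>
      SDP.ext
        (by show a.fst * α.act a.snd (b.fst + c.fst) =
              a.fst * α.act a.snd b.fst + -a.fst + a.fst * α.act a.snd c.fst
            rw [α.act_add, SkewLeftBrace.mul_add_eq, sub_eq_add_neg])
        (by show a.snd * (b.snd + c.snd) = a.snd * b.snd + -a.snd + a.snd * c.snd
            rw [SkewLeftBrace.mul_add_eq, sub_eq_add_neg]) }

end SkewLeftBrace

namespace SkewLeftBrace

variable {B : Type*} [SkewLeftBrace B]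

theorem lmap_add (a x y : B) : lmap a (x + y) = lmap a x + lmap a y := by
  simp only [lmap, mul_add_eq, sub_eq_add_neg, add_assoc]

def lmapHom (a : B) : B →+ B := AddMonoidHom.mk' (lmap a) (lmap_add a)

theorem lmap_zero (a : B) : lmap a 0 = 0 := map_zero (lmapHom a)

theorem lmap_neg (a x : B) : lmap a (-x) = -lmap a x := map_neg (lmapHom a) x

theorem lmap_sub (a x y : B) : lmap a (x - y) = lmap a x - lmap a y := map_sub (lmapHom a) x y

theorem lmap_one (x : B) : lmap 1 x = x := by
  rw [lmap, one_mul, ← zero_eq_one, neg_zero, zero_add]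

theorem lmap_lmap (a b x : B) : lmap a (lmap b x) = lmap (a * b) x := by
  have hb : lmap b x = -b + b * x := rfl
  rw [hb, lmap_add, lmap_neg]
  simp only [lmap, neg_add_rev, neg_neg, ← mul_assoc, add_assoc, add_neg_cancel_left]

theorem lmap_self_inv (a : B) : lmap a a⁻¹ = -a := by
  rw [lmap, mul_inv_cancel, ← zero_eq_one, add_zero]

theorem mul_eq_add_lmap (a b : B) : a * b = a + lmap a b := by
  rw [lmap, add_neg_cancel_left]

theorem add_eq_mul_lmap_inv (a b : B) : a + b = a * lmap a⁻¹ b := by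
  rw [mul_eq_add_lmap, lmap_lmap, mul_inv_cancel, lmap_one]

theorem inv_eq_neg_lmap (a : B) : a⁻¹ = -lmap a⁻¹ a := by
  have h := lmap_self_inv a⁻¹
  rw [inv_inv] at h
  rw [h, neg_neg]

theorem neg_inv_eq_lmap (a : B) : (-a)⁻¹ = lmap (-a)⁻¹ a := by
  refine inv_eq_of_mul_eq_one_right ?_
  rw [← add_eq_mul_lmap_inv, neg_add_cancel, zero_eq_one]

theorem bstar_eq_lmap_sub (a b : B) : bstar a b = lmap a b - b := rfl

theorem bstar_zero_right (a : B) : bstar a 0 = 0 := by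
  rw [bstar_eq_lmap_sub, lmap_zero, sub_zero]

theorem bstar_zero_left (b : B) : bstar 0 b = 0 := by
  rw [bstar_eq_lmap_sub, zero_eq_one, lmap_one, sub_self, zero_eq_one]

theorem bstar_add_right (a b c : B) : bstar a (b + c) = bstar a b + b + bstar a c - b := by
  simp only [bstar_eq_lmap_sub, lmap_add, sub_eq_add_neg, neg_add_rev, add_assoc,
    neg_add_cancel_left]

theorem bstar_mul_left (a b c : B) : bstar (a * b) c = lmap a (bstar b c) + bstar a c := by
  rw [bstar_eq_lmap_sub, bstar_eq_lmap_sub, bstar_eq_lmap_sub, lmap_sub, lmap_lmap]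
  simp only [sub_eq_add_neg, add_assoc, neg_add_cancel_left]

theorem bstar_inv_left (a b : B) : bstar a⁻¹ b = -bstar a (lmap a⁻¹ b) := by
  rw [bstar_eq_lmap_sub, bstar_eq_lmap_sub, lmap_lmap, mul_inv_cancel, lmap_one, neg_sub]

theorem mul_mul_inv_eq (b x : B) : b * x * b⁻¹ = b + (lmap b x + lmap b (bstar x b⁻¹)) + -b := by
  rw [bstar_eq_lmap_sub, lmap_sub, lmap_self_inv, mul_assoc, mul_eq_add_lmap b,
    mul_eq_add_lmap x, lmap_add]
  simp only [sub_neg_eq_add, add_assoc, add_neg_cancel, add_zero]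

theorem setStar_eq_zero_iff {X Y : Set B} :
    setStar X Y = {0} ↔ ∀ x ∈ X, ∀ y ∈ Y, bstar x y = 0 := by
  rw [setStar, ← AddSubgroup.coe_bot, SetLike.coe_set_eq, AddSubgroup.closure_eq_bot_iff]
  constructor
  · exact fun h x hx y hy => h ⟨x, hx, y, hy, rfl⟩
  · rintro h _ ⟨x, hx, y, hy, rfl⟩
    exact h x hx y hy

theorem IsIdeal.bstar_mem_left {I : Set B} (h : IsIdeal I) (a : B) {x : B} (hx : x ∈ I) :
    bstar a x ∈ I := by
  rw [bstar_eq_lmap_sub, sub_eq_add_neg]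
  exact h.add_mem (h.lmap_mem a hx) (h.neg_mem hx)

theorem IsIdeal.bstar_mem_right {I : Set B} (h : IsIdeal I) {x : B} (hx : x ∈ I) (a : B) :
    bstar x a ∈ I := by
  have hconj : a⁻¹ * x * a ∈ I := by simpa using h.mul_conj_mem a⁻¹ hx
  have key : bstar x a = -x + (a + lmap a (a⁻¹ * x * a) + -a) := by
    simp only [bstar, lmap, sub_eq_add_neg, add_assoc, ← mul_assoc, add_neg_cancel_left,
      mul_inv_cancel, one_mul]
  rw [key]
  exact h.add_mem (h.neg_mem hx) (h.add_conj_mem a (h.lmap_mem a hconj))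

theorem IsIdeal.inter {I J : Set B} (hI : IsIdeal I) (hJ : IsIdeal J) : IsIdeal (I ∩ J) where
  zero_mem := ⟨hI.zero_mem, hJ.zero_mem⟩
  add_mem := fun _ _ hx hy => ⟨hI.add_mem hx.1 hy.1, hJ.add_mem hx.2 hy.2⟩
  neg_mem := fun _ hx => ⟨hI.neg_mem hx.1, hJ.neg_mem hx.2⟩
  add_conj_mem := fun b _ hx => ⟨hI.add_conj_mem b hx.1, hJ.add_conj_mem b hx.2⟩
  mul_mem := fun _ _ hx hy => ⟨hI.mul_mem hx.1 hy.1, hJ.mul_mem hx.2 hy.2⟩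
  inv_mem := fun _ hx => ⟨hI.inv_mem hx.1, hJ.inv_mem hx.2⟩
  mul_conj_mem := fun b _ hx => ⟨hI.mul_conj_mem b hx.1, hJ.mul_conj_mem b hx.2⟩
  lmap_mem := fun a _ hx => ⟨hI.lmap_mem a hx.1, hJ.lmap_mem a hx.2⟩

theorem Artinian.wellFounded (h : Artinian B) :
    WellFounded fun J K : {J : Set B // IsIdeal J} => J.1 ⊂ K.1 :=
  wellFounded_iff_isEmpty_descending_chain.2 ⟨fun ⟨f, hf⟩ => by
    obtain ⟨N, hN⟩ := h (fun n => (f n).1) (fun n => (f n).2) (fun n => (hf n).subset)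
    exact (hf N).ne (hN (N + 1) N.le_succ)⟩

theorem Artinian.exists_isMinimalIdeal_subset (h : Artinian B) {I : Set B} (hI : IsIdeal I)
    (hI0 : I ≠ {0}) : ∃ M ⊆ I, IsMinimalIdeal M := by
  obtain ⟨⟨M, hM⟩, ⟨hMI, hM0⟩, hmin⟩ :=
    h.wellFounded.has_min {J | J.1 ⊆ I ∧ J.1 ≠ {0}} ⟨⟨I, hI⟩, subset_rfl, hI0⟩
  refine ⟨M, hMI, hM, hM0, fun J hJ hJM => ?_⟩
  by_contra! hJ0
  exact hmin ⟨J, hJ⟩ ⟨hJM.trans hMI, hJ0.1⟩ (hJM.ssubset_of_ne hJ0.2)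

theorem map_mem_closure_of_mapsTo {s : Set B} (f : B →+ B) (hf : Set.MapsTo f s s) {x : B}
    (hx : x ∈ AddSubgroup.closure s) : f x ∈ AddSubgroup.closure s :=
  (AddSubgroup.closure_le ((AddSubgroup.closure s).comap f)).2
    (fun _ hy => AddSubgroup.subset_closure (hf hy)) hx

theorem bstar_eq_zero_of_mem_closure {s : Set B} {x : B} (hs : ∀ y ∈ s, bstar x y = 0) {y : B}
    (hy : y ∈ AddSubgroup.closure s) : bstar x y = 0 := by
  induction hy using AddSubgroup.closure_induction with
  | mem z hz => exact hs z hz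
  | zero => exact bstar_zero_right x
  | add u v _ _ hu hv => rw [bstar_add_right, hu, hv, zero_add, add_zero, sub_self]
  | neg u _ hu =>
    have h := bstar_add_right x u (-u)
    rwa [add_neg_cancel, bstar_zero_right, hu, zero_add, eq_comm, sub_eq_zero,
      add_eq_left] at h

section ClosureIUnion

variable {ι : Sort*} {F : ι → Set B}

local notation "S" => AddSubgroup.closure (⋃ i, F i)

theorem lmap_mem_closure_iUnion (hF : ∀ i, IsIdeal (F i)) (a : B) {x : B} (hx : x ∈ S) :
    lmap a x ∈ S :=
  map_mem_closure_of_mapsTo (lmapHom a) (fun _ hy => by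
    obtain ⟨i, hyi⟩ := Set.mem_iUnion.1 hy
    exact Set.mem_iUnion.2 ⟨i, (hF i).lmap_mem a hyi⟩) hx

theorem add_conj_mem_closure_iUnion (hF : ∀ i, IsIdeal (F i)) (b : B) {x : B} (hx : x ∈ S) :
    b + x + -b ∈ S :=
  map_mem_closure_of_mapsTo (AddAut.addConj b).toAddMonoidHom (fun _ hy => by
    obtain ⟨i, hyi⟩ := Set.mem_iUnion.1 hy
    exact Set.mem_iUnion.2 ⟨i, (hF i).add_conj_mem b hyi⟩) hx

theorem mul_mem_closure_iUnion (hF : ∀ i, IsIdeal (F i)) {x y : B} (hx : x ∈ S) (hy : y ∈ S) :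
    x * y ∈ S := by
  rw [mul_eq_add_lmap]
  exact add_mem hx (lmap_mem_closure_iUnion hF x hy)

theorem inv_mem_closure_iUnion (hF : ∀ i, IsIdeal (F i)) {x : B} (hx : x ∈ S) : x⁻¹ ∈ S := by
  rw [inv_eq_neg_lmap]
  exact neg_mem (lmap_mem_closure_iUnion hF _ hx)

/-- Stated for all `λ`-translates of `x` so that the induction goes through: a sum `u + v` is
rewritten as `u ∘ λ_{u⁻¹}(v)` and a negative `-u` as `(λ_{(-u)⁻¹}(u))⁻¹`. -/
theorem bstar_lmap_mem_closure_iUnion (hF : ∀ i, IsIdeal (F i)) {x : B} (hx : x ∈ S) (a c : B) :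
    bstar (lmap a x) c ∈ S := by
  induction hx using AddSubgroup.closure_induction generalizing a c with
  | mem y hy =>
    obtain ⟨i, hyi⟩ := Set.mem_iUnion.1 hy
    exact AddSubgroup.subset_closure
      (Set.mem_iUnion.2 ⟨i, (hF i).bstar_mem_right ((hF i).lmap_mem a hyi) c⟩)
  | zero => rw [lmap_zero, bstar_zero_left]; exact zero_mem _
  | add u v _ _ hu hv =>
    rw [lmap_add, add_eq_mul_lmap_inv, lmap_lmap, bstar_mul_left]
    exact add_mem (lmap_mem_closure_iUnion hF _ (hv _ c)) (hu a c)
  | neg u _ hu =>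
    rw [lmap_neg, ← inv_inv (-lmap a u), bstar_inv_left, neg_inv_eq_lmap, lmap_lmap]
    exact neg_mem (hu _ _)

theorem bstar_mem_closure_iUnion (hF : ∀ i, IsIdeal (F i)) {x : B} (hx : x ∈ S) (c : B) :
    bstar x c ∈ S := by
  simpa only [lmap_one] using bstar_lmap_mem_closure_iUnion hF hx 1 c

theorem isIdeal_closure_iUnion (hF : ∀ i, IsIdeal (F i)) : IsIdeal (S : Set B) where
  zero_mem := zero_mem _
  add_mem := fun _ _ hx hy => add_mem hx hy
  neg_mem := fun _ hx => neg_mem hx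
  add_conj_mem := fun b _ hx => add_conj_mem_closure_iUnion hF b hx
  mul_mem := fun _ _ hx hy => mul_mem_closure_iUnion hF hx hy
  inv_mem := fun _ hx => inv_mem_closure_iUnion hF hx
  mul_conj_mem := fun b x hx => by
    rw [mul_mul_inv_eq]
    exact add_conj_mem_closure_iUnion hF b (add_mem (lmap_mem_closure_iUnion hF b hx)
      (lmap_mem_closure_iUnion hF b (bstar_mem_closure_iUnion hF hx b⁻¹)))
  lmap_mem := fun a _ hx => lmap_mem_closure_iUnion hF a hx

theorem lmap_eq_self_of_mem_closure_iUnion (hF : ∀ i, IsIdeal (F i))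
    (hz : ∀ i j, ∀ x ∈ F i, ∀ y ∈ F j, bstar x y = 0) {x : B} (hx : x ∈ S) :
    ∀ y ∈ S, lmap x y = y := by
  have inv_fix : ∀ u : B, (∀ y ∈ S, lmap u y = y) → ∀ y ∈ S, lmap u⁻¹ y = y := fun u hu y hy => by
    rw [← hu _ (lmap_mem_closure_iUnion hF u⁻¹ hy), lmap_lmap, mul_inv_cancel, lmap_one]
  induction hx using AddSubgroup.closure_induction with
  | mem z hz' =>
    obtain ⟨i, hzi⟩ := Set.mem_iUnion.1 hz'
    intro y hy
    refine (sub_eq_zero.1 (bstar_eq_zero_of_mem_closure (fun w hw => ?_) hy))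
    obtain ⟨j, hwj⟩ := Set.mem_iUnion.1 hw
    exact hz i j z hzi w hwj
  | zero => exact fun y _ => by rw [zero_eq_one, lmap_one]
  | add u v _ hv hu_fix hv_fix =>
    intro y hy
    rw [add_eq_mul_lmap_inv, inv_fix u hu_fix v hv, ← lmap_lmap, hv_fix y hy, hu_fix y hy]
  | neg u hu hu_fix =>
    have hneg : -u = u⁻¹ := by
      rw [← lmap_self_inv, hu_fix _ (inv_mem_closure_iUnion hF hu)]
    rw [hneg]
    exact inv_fix u hu_fix

theorem bstar_eq_zero_of_mem_closure_iUnion (hF : ∀ i, IsIdeal (F i))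
    (hz : ∀ i j, ∀ x ∈ F i, ∀ y ∈ F j, bstar x y = 0) : ∀ x ∈ S, ∀ y ∈ S, bstar x y = 0 := by
  intro x hx y hy
  rw [bstar_eq_lmap_sub, lmap_eq_self_of_mem_closure_iUnion hF hz hx y hy, sub_self]

end ClosureIUnion

section Action

variable {B₁ B₂ : Type*} [SkewLeftBrace B₁] [SkewLeftBrace B₂] (α : BraceActionHom B₂ B₁)

def BraceActionHom.actAddHom (c : B₂) : B₁ →+ B₁ := AddMonoidHom.mk' (α.act c) (α.act_add c)

theorem BraceActionHom.act_zero (c : B₂) : α.act c 0 = 0 := map_zero (α.actAddHom c)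

theorem BraceActionHom.act_neg (c : B₂) (x : B₁) : α.act c (-x) = -α.act c x :=
  map_neg (α.actAddHom c) x

theorem BraceActionHom.act_inv (c : B₂) (x : B₁) : α.act c x⁻¹ = (α.act c x)⁻¹ :=
  map_inv (MonoidHom.mk' (α.act c) (α.act_mul c)) x

theorem BraceActionHom.act_act_inv (c : B₂) (x : B₁) : α.act c (α.act c⁻¹ x) = x := by
  rw [← α.act_hom, mul_inv_cancel, α.act_one]

theorem BraceActionHom.act_lmap (c : B₂) (a x : B₁) :
    α.act c (lmap a x) = lmap (α.act c a) (α.act c x) := by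
  rw [lmap, lmap, α.act_add, α.act_neg, α.act_mul]

theorem BraceActionHom.act_bstar (c : B₂) (x y : B₁) :
    α.act c (bstar x y) = bstar (α.act c x) (α.act c y) := by
  rw [bstar_eq_lmap_sub, bstar_eq_lmap_sub, sub_eq_add_neg, sub_eq_add_neg, α.act_add,
    α.act_neg, α.act_lmap]

theorem BraceActionHom.isIdeal_image {M : Set B₁} (h : IsIdeal M) (c : B₂) :
    IsIdeal (α.act c '' M) where
  zero_mem := ⟨0, h.zero_mem, α.act_zero c⟩
  add_mem := by
    rintro _ _ ⟨u, hu, rfl⟩ ⟨v, hv, rfl⟩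
    exact ⟨u + v, h.add_mem hu hv, α.act_add c u v⟩
  neg_mem := by
    rintro _ ⟨u, hu, rfl⟩
    exact ⟨-u, h.neg_mem hu, α.act_neg c u⟩
  add_conj_mem := by
    rintro b _ ⟨u, hu, rfl⟩
    refine ⟨α.act c⁻¹ b + u + -α.act c⁻¹ b, h.add_conj_mem _ hu, ?_⟩
    rw [α.act_add, α.act_add, α.act_neg, α.act_act_inv]
  mul_mem := by
    rintro _ _ ⟨u, hu, rfl⟩ ⟨v, hv, rfl⟩
    exact ⟨u * v, h.mul_mem hu hv, α.act_mul c u v⟩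
  inv_mem := by
    rintro _ ⟨u, hu, rfl⟩
    exact ⟨u⁻¹, h.inv_mem hu, α.act_inv c u⟩
  mul_conj_mem := by
    rintro b _ ⟨u, hu, rfl⟩
    refine ⟨α.act c⁻¹ b * u * (α.act c⁻¹ b)⁻¹, h.mul_conj_mem _ hu, ?_⟩
    rw [α.act_mul, α.act_mul, α.act_inv, α.act_act_inv]
  lmap_mem := by
    rintro a _ ⟨u, hu, rfl⟩
    refine ⟨lmap (α.act c⁻¹ a) u, h.lmap_mem _ hu, ?_⟩
    rw [α.act_lmap, α.act_act_inv]

theorem BraceActionHom.bstar_eq_zero_of_mem_image {M : Set B₁} (hM : IsMinimalIdeal M)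
    (hMM : ∀ x ∈ M, ∀ y ∈ M, bstar x y = 0) (a b : B₂) :
    ∀ x ∈ α.act a '' M, ∀ y ∈ α.act b '' M, bstar x y = 0 := by
  have hM_image : ∀ c : B₂, ∀ x ∈ M, ∀ y ∈ α.act c '' M, bstar x y = 0 := by
    intro c x hx y hy
    have hxy : bstar x y ∈ M ∩ α.act c '' M :=
      ⟨hM.1.bstar_mem_right hx y, (α.isIdeal_image hM.1 c).bstar_mem_left x hy⟩
    rcases hM.2.2 _ (hM.1.inter (α.isIdeal_image hM.1 c)) Set.inter_subset_left with h0 | hMc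
    · rw [h0] at hxy
      exact hxy
    · obtain ⟨u, hu, rfl⟩ := (hMc ▸ hx).2
      obtain ⟨v, hv, rfl⟩ := hy
      rw [← α.act_bstar, hMM u hu v hv, α.act_zero]
  rintro _ ⟨u, hu, rfl⟩ y hy
  have hy' : α.act a⁻¹ y ∈ α.act (a⁻¹ * b) '' M := by
    obtain ⟨v, hv, rfl⟩ := hy
    exact ⟨v, hv, α.act_hom _ _ v⟩
  rw [← α.act_act_inv a y, ← α.act_bstar, hM_image _ u hu _ hy', α.act_zero]

theorem BraceActionHom.act_mem_closure_iUnion_image (M : Set B₁) (c : B₂) {x : B₁}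
    (hx : x ∈ AddSubgroup.closure (⋃ d, α.act d '' M)) :
    α.act c x ∈ AddSubgroup.closure (⋃ d, α.act d '' M) :=
  map_mem_closure_of_mapsTo (α.actAddHom c) (fun _ hy => by
    obtain ⟨d, u, hu, rfl⟩ := Set.mem_iUnion.1 hy
    exact Set.mem_iUnion.2 ⟨c * d, u, hu, α.act_hom c d u⟩) hx

def SDP.prodZero (S : Set B₁) : Set (SDP B₁ B₂) := {p | p.fst ∈ S ∧ p.snd = 0}

theorem BraceActionHom.isIdeal_prodZero {S : Set B₁} (hS : IsIdeal S)
    (hαS : ∀ c, ∀ x ∈ S, α.act c x ∈ S) : @IsIdeal _ α.sdp (SDP.prodZero S) := by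
  let _ := α.sdp
  have act_zero : ∀ x : B₁, α.act 0 x = x := fun x => by rw [zero_eq_one, α.act_one]
  have inv_zero : (0 : B₂)⁻¹ = 0 := by rw [zero_eq_one, inv_one]
  constructor
  · exact ⟨hS.zero_mem, rfl⟩
  · rintro x y ⟨hx, hx0⟩ ⟨hy, hy0⟩
    exact ⟨hS.add_mem hx hy, show x.snd + y.snd = 0 by rw [hx0, hy0, add_zero]⟩
  · rintro x ⟨hx, hx0⟩
    exact ⟨hS.neg_mem hx, show -x.snd = 0 by rw [hx0, neg_zero]⟩
  · rintro b x ⟨hx, hx0⟩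
    exact ⟨hS.add_conj_mem b.fst hx,
      show b.snd + x.snd + -b.snd = 0 by rw [hx0, add_zero, add_neg_cancel]⟩
  · rintro x y ⟨hx, hx0⟩ ⟨hy, hy0⟩
    refine ⟨show x.fst * α.act x.snd y.fst ∈ S from ?_, show x.snd * y.snd = 0 from ?_⟩
    · rw [hx0, act_zero]
      exact hS.mul_mem hx hy
    · rw [hy0, mul_zero', hx0]
  · rintro x ⟨hx, hx0⟩
    refine ⟨show α.act x.snd⁻¹ x.fst⁻¹ ∈ S from ?_, show x.snd⁻¹ = 0 from ?_⟩
    · rw [hx0, inv_zero, act_zero]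
      exact hS.inv_mem hx
    · rw [hx0, inv_zero]
  · rintro b x ⟨hx, hx0⟩
    refine ⟨show b.fst * α.act b.snd x.fst * α.act (b.snd * x.snd) (α.act b.snd⁻¹ b.fst⁻¹) ∈ S
      from ?_, show b.snd * x.snd * b.snd⁻¹ = 0 from ?_⟩
    · rw [hx0, mul_zero', α.act_act_inv]
      exact hS.mul_conj_mem b.fst (hαS b.snd x.fst hx)
    · rw [hx0, mul_zero', mul_inv_cancel, zero_eq_one]
  · rintro a x ⟨hx, hx0⟩
    refine ⟨show -a.fst + a.fst * α.act a.snd x.fst ∈ S from ?_,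
      show -a.snd + a.snd * x.snd = 0 from ?_⟩
    · exact hS.lmap_mem a.fst (hαS a.snd x.fst hx)
    · rw [hx0, mul_zero', neg_add_cancel]

theorem BraceActionHom.not_semiprime_sdp {S : Set B₁} (hS : IsIdeal S)
    (hαS : ∀ c, ∀ x ∈ S, α.act c x ∈ S) (hS0 : S ≠ {0})
    (hSS : ∀ x ∈ S, ∀ y ∈ S, bstar x y = 0) : ¬ @Semiprime _ α.sdp := by
  let _ := α.sdp
  intro hsp
  refine hsp (SDP.prodZero S) (α.isIdeal_prodZero hS hαS) ?_ (setStar_eq_zero_iff.2 ?_)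
  · obtain ⟨x, hx, hx0⟩ : ∃ x ∈ S, x ≠ 0 := by
      by_contra! h
      exact hS0 (Set.eq_singleton_iff_unique_mem.2 ⟨hS.zero_mem, h⟩)
    intro h
    have hmem : (⟨x, 0⟩ : SDP B₁ B₂) ∈ SDP.prodZero S := ⟨hx, rfl⟩
    rw [h] at hmem
    exact hx0 (congrArg SDP.fst hmem)
  · rintro x ⟨hx, hx0⟩ y ⟨hy, hy0⟩
    refine SDP.ext ?_ ?_
    · show -x.fst + x.fst * α.act x.snd y.fst + -y.fst = 0
      rw [← sub_eq_add_neg, hx0, zero_eq_one, α.act_one]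
      exact hSS _ hx _ hy
    · show -x.snd + x.snd * y.snd + -y.snd = 0
      rw [hx0, hy0, mul_zero', neg_zero, zero_add, add_zero]

end Action

end SkewLeftBrace

open SkewLeftBrace

/-- If the semidirect product `B₁ ⋊_α B₂` is semiprime and `B₁` is Artinian, then
`B₁` is semiprime. -/
theorem semiprime_of_sdp_semiprime_of_artinian {B₁ B₂ : Type*}
    [SkewLeftBrace B₁] [SkewLeftBrace B₂] (α : BraceActionHom B₂ B₁)
    (hart : SkewLeftBrace.Artinian B₁)
    (hsp : @SkewLeftBrace.Semiprime _ α.sdp) :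
    SkewLeftBrace.Semiprime B₁ := by
  intro I hI hI0 hII
  obtain ⟨M, hMI, hM⟩ := hart.exists_isMinimalIdeal_subset hI hI0
  have hMM : ∀ x ∈ M, ∀ y ∈ M, bstar x y = 0 := fun x hx y hy =>
    setStar_eq_zero_iff.1 hII x (hMI hx) y (hMI hy)
  have hF : ∀ c, IsIdeal (α.act c '' M) := α.isIdeal_image hM.1
  set S := AddSubgroup.closure (⋃ c, α.act c '' M)
  have hMS : M ⊆ S := fun x hx =>
    AddSubgroup.subset_closure (Set.mem_iUnion.2 ⟨1, x, hx, α.act_one x⟩)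
  have hS0 : (S : Set B₁) ≠ {0} := fun h =>
    hM.2.1 (Set.Subset.antisymm (h ▸ hMS) (Set.singleton_subset_iff.2 hM.1.zero_mem))
  have hSS : ∀ x ∈ S, ∀ y ∈ S, bstar x y = 0 :=
    bstar_eq_zero_of_mem_closure_iUnion hF (α.bstar_eq_zero_of_mem_image hM hMM)
  exact α.not_semiprime_sdp (isIdeal_closure_iUnion hF)
    (fun c _ => α.act_mem_closure_iUnion_image M c) hS0 hSS hsp
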